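/- arXiv:1610.07517 — 3 statements merged into one kernel-verified Lean document; each statement's English description precedes it below -/
import Mathlib

section
/- Let f₁,…,fₙ : X → X be continuous open maps (X the circle S¹ or a closed interval) and let M be a minimal set for IFS(f₁,…,fₙ). If M has finitely many (and at least one) nontrivial connected components I₁,…,I_k, then M = I₁ ∪ … ∪ I_k, i.e. M is exactly the union of its nontrivial connected components. -/
/-!
A nontrivial connected subset of the circle or of an interval has nonempty interior, and no
point of these spaces is isolated; hence a continuous open map sends every nontrivial component
of `M` into a nontrivial component. The union of the nontrivial components is therefore
invariant, and it is closed because there are only finitely many of them. Containing one point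
of `M`, it contains the closure of its orbit, which is `M` by minimality.
-/

open Set Topology Filter

/-- The circle. -/
abbrev S1 := AddCircle (1 : ℝ)

/-- Apply a word `l = [i₁, …, i_k]` of generators: `f i₁ ∘ ⋯ ∘ f i_k`. -/
def applyWord {X : Type*} {n : ℕ} (f : Fin n → X → X) (l : List (Fin n)) (x : X) : X :=
  l.foldr (fun i y => f i y) x

/-- The orbit of `x` under the semigroup `IFS(f₁,…,fₙ)` (nonempty words). -/
def orbitIFS {X : Type*} {n : ℕ} (f : Fin n → X → X) (x : X) : Set X :=
  {y | ∃ l : List (Fin n), l ≠ [] ∧ y = applyWord f l x}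

/-- `M` is a minimal set for the IFS generated by `f₁,…,fₙ`. -/
def IsMinimalIFS {X : Type*} [TopologicalSpace X] {n : ℕ} (f : Fin n → X → X)
    (M : Set X) : Prop :=
  M.Nonempty ∧ IsClosed M ∧ (∀ i, f i '' M ⊆ M) ∧
    ∀ x ∈ M, closure (orbitIFS f x) = M

/-- A Cantor set: nonempty, compact, perfect and totally disconnected. -/
def IsCantorSet {X : Type*} [TopologicalSpace X] (K : Set X) : Prop :=
  K.Nonempty ∧ IsCompact K ∧ Perfect K ∧ IsTotallyDisconnected K

/-- `X` is (homeomorphic to) the circle or a (nondegenerate) closed interval. -/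
def IsCircleOrInterval (X : Type*) [TopologicalSpace X] : Prop :=
  Nonempty (X ≃ₜ S1) ∨ ∃ a b : ℝ, a < b ∧ Nonempty (X ≃ₜ Set.Icc a b)

/-- The canonical decomposition `M = 𝓘 ∪ K ∪ N` of a closed set:
`𝓘` is the interior (union of components of the interior), `K` is the maximal
Cantor set contained in `M \ 𝓘` (possibly empty), and `N` is the countable remainder. -/
def IsCanonicalDecomp {X : Type*} [TopologicalSpace X] (M I K N : Set X) : Prop :=
  I = interior M ∧
  (IsCantorSet K ∨ K = ∅) ∧
  K ⊆ M \ I ∧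
  (∀ K₁ : Set X, IsCantorSet K₁ → K ⊆ K₁ → K₁ ⊆ M \ I → K₁ = K) ∧
  N = M \ (I ∪ K) ∧
  N.Countable

/-- A symmetric Cantorval: a nonempty compact set which is the closure of its interior,
and such that both endpoints of every nontrivial connected component are accumulation
points of one-point connected components. -/
def IsSymmetricCantorval {X : Type*} [TopologicalSpace X] (M : Set X) : Prop :=
  M.Nonempty ∧ IsCompact M ∧ M = closure (interior M) ∧
  ∀ x ∈ M, ¬ (connectedComponentIn M x).Subsingleton →
    ∀ z ∈ frontier (connectedComponentIn M x),
      AccPt z (𝓟 {y | y ∈ M ∧ connectedComponentIn M y = {y}})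

theorem IsPreconnected.interior_nonempty_of_nontrivial {α : Type*} [LinearOrder α]
    [DenselyOrdered α] [TopologicalSpace α] [OrderTopology α] {C : Set α}
    (hC : IsPreconnected C) (hnt : C.Nontrivial) : (interior C).Nonempty := by
  obtain ⟨x, hx, y, hy, hxy⟩ := hnt
  wlog hlt : x < y generalizing x y
  · exact this y hy x hx hxy.symm (hxy.lt_or_gt.resolve_left hlt)
  obtain ⟨z, hz⟩ := exists_between hlt
  exact ⟨z, interior_maximal (Ioo_subset_Icc_self.trans (hC.Icc_subset hx hy)) isOpen_Ioo hz⟩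

theorem OpenPartialHomeomorph.interior_nonempty_of_isPreconnected {α X : Type*}
    [LinearOrder α] [DenselyOrdered α] [TopologicalSpace α] [OrderTopology α]
    [TopologicalSpace X] (φ : OpenPartialHomeomorph α X) {C : Set X}
    (hC : IsPreconnected C) (hnt : C.Nontrivial) (hCφ : C ⊆ φ.target) :
    (interior C).Nonempty := by
  have hD : IsPreconnected (φ.symm '' C) := hC.image _ (φ.continuousOn_symm.mono hCφ)
  obtain ⟨y, hy⟩ :=
    hD.interior_nonempty_of_nontrivial (hnt.image_of_injOn (φ.symm.injOn.mono hCφ))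
  have hDφ : φ.symm '' C ⊆ φ.source := (φ.mapsTo_symm.mono_left hCφ).image_subset
  have hφD : φ '' (φ.symm '' C) = C := φ.toPartialEquiv.image_symm_image_of_subset_target hCφ
  refine ⟨φ y, interior_maximal ?_ (φ.isOpen_image_of_subset_source isOpen_interior
    (interior_subset.trans hDφ)) (mem_image_of_mem _ hy)⟩
  exact (image_mono interior_subset).trans hφD.subset

namespace IsCircleOrInterval

variable {X : Type*} [TopologicalSpace X]

theorem interior_nonempty (hX : IsCircleOrInterval X) {C : Set X} (hC : IsPreconnected C)
    (hnt : C.Nontrivial) : (interior C).Nonempty := by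
  rcases hX with ⟨⟨e⟩⟩ | ⟨a, b, -, ⟨e⟩⟩
  · by_cases hCu : C = univ
    · simpa [hCu] using hnt.nonempty
    obtain ⟨p, hp⟩ := (ne_univ_iff_exists_notMem C).mp hCu
    obtain ⟨t, ht⟩ := QuotientAddGroup.mk_surjective (e p)
    -- `C` lies in the chart `Ioo t (t + 1) → S1 \ {e p}` of the circle, pulled back along `e`
    have : Fact ((0 : ℝ) < 1) := ⟨one_pos⟩
    refine ((AddCircle.openPartialHomeomorphCoe 1 t).trans
      e.symm.toOpenPartialHomeomorph).interior_nonempty_of_isPreconnected hC hnt ?_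
    intro x hx
    simpa using fun h : e x = (t : S1) => hp (e.injective (h.trans ht) ▸ hx)
  · exact e.symm.toOpenPartialHomeomorph.interior_nonempty_of_isPreconnected hC hnt
      (by simp)

theorem neBot_nhdsNE (hX : IsCircleOrInterval X) (x : X) : NeBot (𝓝[≠] x) := by
  have of_homeomorph : ∀ {Y : Type} [TopologicalSpace Y] [ConnectedSpace Y] [Nontrivial Y]
      [T1Space Y], (X ≃ₜ Y) → NeBot (𝓝[≠] x) := by
    intro Y _ _ _ _ e
    have := e.symm.surjective.connectedSpace e.symm.continuous
    have := e.surjective.nontrivial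
    have := e.symm.t1Space
    infer_instance
  rcases hX with ⟨⟨e⟩⟩ | ⟨a, b, hab, ⟨e⟩⟩
  · have : Fact ((0 : ℝ) < 1) := ⟨one_pos⟩
    have : Nontrivial S1 := ⟨((1 / 2 : ℝ) : S1), 0, fun h => by
      have := (AddCircle.coe_eq_zero_iff_of_mem_Ico (p := (1 : ℝ)) (a := 1 / 2)
        ⟨by norm_num, by norm_num⟩).mp h
      norm_num at this⟩
    exact of_homeomorph e
  · have : ConnectedSpace (Icc a b) := Subtype.connectedSpace (isConnected_Icc hab.le)
    have : Nontrivial (Icc a b) := ⟨⟨a, left_mem_Icc.mpr hab.le⟩, ⟨b, right_mem_Icc.mpr hab.le⟩,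
      fun h => hab.ne (congrArg Subtype.val h)⟩
    exact of_homeomorph e

theorem image_nontrivial_of_isOpenMap (hX : IsCircleOrInterval X) {g : X → X}
    (hg : IsOpenMap g) {C : Set X} (hC : IsPreconnected C) (hnt : C.Nontrivial) :
    (g '' C).Nontrivial := by
  have := hX.neBot_nhdsNE
  obtain ⟨z, hz⟩ := hX.interior_nonempty hC hnt
  rcases (Nonempty.image g ⟨z, hz⟩).exists_eq_singleton_or_nontrivial with ⟨y, hy⟩ | h
  · exact absurd (hy ▸ hg _ isOpen_interior) (not_isOpen_singleton y)
  · exact h.mono (image_mono interior_subset)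

end IsCircleOrInterval

section Components

variable {X : Type*} [TopologicalSpace X]

theorem IsClosed.connectedComponentIn {F : Set X} (hF : IsClosed F) (x : X) :
    IsClosed (connectedComponentIn F x) := by
  by_cases hx : x ∈ F
  · exact isClosed_of_closure_subset <|
      isPreconnected_connectedComponentIn.closure.subset_connectedComponentIn
        (subset_closure (mem_connectedComponentIn hx))
        (closure_minimal (connectedComponentIn_subset F x) hF)
  · simp [connectedComponentIn_eq_empty hx]

def nontrivialComponents (M : Set X) : Set (Set X) :=
  {C | (∃ x ∈ M, C = connectedComponentIn M x) ∧ ¬ C.Subsingleton}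

theorem mem_sUnion_nontrivialComponents {M : Set X} {x : X} :
    x ∈ ⋃₀ nontrivialComponents M ↔ x ∈ M ∧ (connectedComponentIn M x).Nontrivial := by
  constructor
  · rintro ⟨_, ⟨⟨y, -, rfl⟩, hnt⟩, hx⟩
    rw [connectedComponentIn_eq hx] at hnt
    exact ⟨connectedComponentIn_subset M y hx, not_subsingleton_iff.mp hnt⟩
  · rintro ⟨hx, hnt⟩
    exact ⟨_, ⟨⟨x, hx, rfl⟩, hnt.not_subsingleton⟩, mem_connectedComponentIn hx⟩

theorem IsClosed.sUnion_nontrivialComponents {M : Set X} (hM : IsClosed M)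
    (hfin : (nontrivialComponents M).Finite) : IsClosed (⋃₀ nontrivialComponents M) := by
  rw [sUnion_eq_biUnion]
  exact hfin.isClosed_biUnion fun C ⟨⟨x, _, hC⟩, _⟩ => hC ▸ hM.connectedComponentIn x

theorem mapsTo_sUnion_nontrivialComponents {M : Set X} {g : X → X} (hg : Continuous g)
    (hgM : MapsTo g M M)
    (hnt : ∀ C : Set X, IsPreconnected C → C.Nontrivial → (g '' C).Nontrivial) :
    MapsTo g (⋃₀ nontrivialComponents M) (⋃₀ nontrivialComponents M) := by
  intro x hx
  obtain ⟨hxM, hxC⟩ := mem_sUnion_nontrivialComponents.mp hx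
  have himage : g '' connectedComponentIn M x ⊆ connectedComponentIn M (g x) :=
    (isPreconnected_connectedComponentIn.image g hg.continuousOn).subset_connectedComponentIn
      (mem_image_of_mem g (mem_connectedComponentIn hxM))
      (hgM.mono_left (connectedComponentIn_subset M x)).image_subset
  exact mem_sUnion_nontrivialComponents.mpr
    ⟨hgM hxM, (hnt _ isPreconnected_connectedComponentIn hxC).mono himage⟩

end Components

theorem applyWord_mem {X : Type*} {n : ℕ} {f : Fin n → X → X} {S : Set X}
    (hS : ∀ i, MapsTo (f i) S S) (l : List (Fin n)) {x : X} (hx : x ∈ S) :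
    applyWord f l x ∈ S := by
  induction l with
  | nil => exact hx
  | cons i l ih => exact hS i ih

theorem IsMinimalIFS.subset_of_mapsTo {X : Type*} [TopologicalSpace X] {n : ℕ}
    {f : Fin n → X → X} {M S : Set X} (hM : IsMinimalIFS f M) (hS : IsClosed S)
    (hfS : ∀ i, MapsTo (f i) S S) {x : X} (hxM : x ∈ M) (hxS : x ∈ S) : M ⊆ S := by
  rw [← hM.2.2.2 x hxM]
  exact closure_minimal (fun _ ⟨l, _, hy⟩ => hy ▸ applyWord_mem hfS l hxS) hS

theorem stmt4 {X : Type*} [TopologicalSpace X] (hX : IsCircleOrInterval X)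
    {n : ℕ} (f : Fin n → X → X)
    (hcont : ∀ i, Continuous (f i)) (hopen : ∀ i, IsOpenMap (f i))
    (M : Set X) (hM : IsMinimalIFS f M)
    (hfin : {C : Set X | (∃ x ∈ M, C = connectedComponentIn M x) ∧ ¬ C.Subsingleton}.Finite)
    (hne : {C : Set X | (∃ x ∈ M, C = connectedComponentIn M x) ∧ ¬ C.Subsingleton}.Nonempty) :
    M = ⋃₀ {C : Set X | (∃ x ∈ M, C = connectedComponentIn M x) ∧ ¬ C.Subsingleton} := by
  change M = ⋃₀ nontrivialComponents M
  change (nontrivialComponents M).Finite at hfin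
  obtain ⟨_, ⟨x, hxM, rfl⟩, hxC⟩ := hne
  have hinv (i : Fin n) : MapsTo (f i) M M := image_subset_iff.mp (hM.2.2.1 i)
  have hUinv (i : Fin n) :
      MapsTo (f i) (⋃₀ nontrivialComponents M) (⋃₀ nontrivialComponents M) :=
    mapsTo_sUnion_nontrivialComponents (hcont i) (hinv i)
      fun _ => hX.image_nontrivial_of_isOpenMap (hopen i)
  have hxU : x ∈ ⋃₀ nontrivialComponents M :=
    mem_sUnion_nontrivialComponents.mpr ⟨hxM, not_subsingleton_iff.mp hxC⟩
  exact (hM.subset_of_mapsTo (hM.2.1.sUnion_nontrivialComponents hfin) hUinv hxM hxU).antisymm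
    fun y hy => (mem_sUnion_nontrivialComponents.mp hy).1
end

section
/- Let f₁,…,fₙ : S¹ → S¹ be continuous open maps and let M be a minimal set for IFS(f₁,…,fₙ), with canonical decomposition M = 𝓘 ∪ K ∪ N. It is impossible that simultaneously N ≠ ∅, K ≠ ∅, and ∂𝓘 ∩ N = ∅ (equivalently ∂𝓘 ⊆ K); in particular, if K ≠ ∅ and N ≠ ∅ then ∂𝓘 ∩ N ≠ ∅. -/
open Set Topology Filter

/-!
For continuous open maps of the circle, which are locally injective, the accumulation points of
`M` lying in `M` form a closed invariant set; so as soon as `K ≠ ∅` supplies one, minimality makes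
`M` perfect. If `∂𝓘 ∩ N = ∅`, a point `z ∈ N` lies outside `closure 𝓘`. The closure of
`M \ closure 𝓘` is then a perfect subset of `M \ 𝓘`, a set with empty interior, so its union with
`K` is again a Cantor set, and maximality of `K` puts `z` into `K`, a contradiction.
-/

section OpenMapInterval

variable {α β : Type*} [ConditionallyCompleteLinearOrder α] [TopologicalSpace α] [OrderTopology α]
  [DenselyOrdered α] [LinearOrder β] [TopologicalSpace β] [OrderTopology β]
  [DenselyOrdered β] [NoMaxOrder β] [NoMinOrder β] {h : α → β}

theorem ContinuousOn.apply_ne_of_isOpen_image_Ioo {a b : α} (hab : a < b)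
    (hc : ContinuousOn h (Icc a b)) (ho : IsOpen (h '' Ioo a b)) : h a ≠ h b := by
  -- An open image has no extreme value at an interior point, so both extrema of `h` on `[a, b]`
  -- are taken at the endpoints; with `h a = h b` this makes `h` constant.
  intro hend
  have not_isMax : ∀ c ∈ Ioo a b, ∃ d ∈ Ioo a b, h c < h d := fun c hc => by
    obtain ⟨_, hcy, d, hd, rfl⟩ := Eventually.exists_gt (ho.mem_nhds (mem_image_of_mem h hc))
    exact ⟨d, hd, hcy⟩
  have not_isMin : ∀ c ∈ Ioo a b, ∃ d ∈ Ioo a b, h d < h c := fun c hc => by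
    obtain ⟨_, hcy, d, hd, rfl⟩ := Eventually.exists_lt (ho.mem_nhds (mem_image_of_mem h hc))
    exact ⟨d, hd, hcy⟩
  have at_endpoint : ∀ c ∈ Icc a b, c ∉ Ioo a b → h c = h a := by
    rintro c ⟨hac, hcb⟩ hc
    rcases hac.eq_or_lt with rfl | hac
    · rfl
    · rw [hend, (not_lt.1 fun hcb' => hc ⟨hac, hcb'⟩).antisymm hcb]
  obtain ⟨cmax, hcmax, hmax⟩ := isCompact_Icc.exists_isMaxOn (nonempty_Icc.2 hab.le) hc
  obtain ⟨cmin, hcmin, hmin⟩ := isCompact_Icc.exists_isMinOn (nonempty_Icc.2 hab.le) hc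
  have hmax_end : h cmax = h a := at_endpoint cmax hcmax fun hc' => by
    obtain ⟨d, hd, hlt⟩ := not_isMax cmax hc'
    exact (hmax (Ioo_subset_Icc_self hd)).not_gt hlt
  have hmin_end : h cmin = h a := at_endpoint cmin hcmin fun hc' => by
    obtain ⟨d, hd, hlt⟩ := not_isMin cmin hc'
    exact (hmin (Ioo_subset_Icc_self hd)).not_gt hlt
  obtain ⟨c, hc⟩ := nonempty_Ioo.2 hab
  obtain ⟨d, hd, hcd⟩ := not_isMax c hc
  have hd_le : h d ≤ h a := hmax_end ▸ hmax (Ioo_subset_Icc_self hd)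
  have hc_ge : h a ≤ h c := hmin_end ▸ hmin (Ioo_subset_Icc_self hc)
  exact (hcd.trans_le hd_le).not_ge hc_ge

theorem ContinuousOn.injOn_of_isOpen_image {J : Set α} (hJ : J.OrdConnected)
    (hc : ContinuousOn h J) (ho : ∀ U ⊆ J, IsOpen U → IsOpen (h '' U)) : InjOn h J := by
  have key : ∀ x ∈ J, ∀ y ∈ J, x < y → h x ≠ h y := fun x hx y hy hxy =>
    (hc.mono (hJ.out hx hy)).apply_ne_of_isOpen_image_Ioo hxy
      (ho _ (Ioo_subset_Icc_self.trans (hJ.out hx hy)) isOpen_Ioo)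
  intro x hx y hy hxy
  by_contra hne
  rcases lt_or_gt_of_ne hne with hlt | hlt
  · exact key x hx y hy hlt hxy
  · exact key y hy x hx hlt hxy.symm

end OpenMapInterval

namespace AddCircle

theorem exists_mem_nhds_injOn_of_isOpenMap {p q : ℝ} {g : AddCircle p → AddCircle q}
    (hg : Continuous g) (hgo : IsOpenMap g) (x : AddCircle p) : ∃ V ∈ 𝓝 x, InjOn g V := by
  obtain ⟨t, rfl⟩ := QuotientAddGroup.mk_surjective x
  obtain ⟨u, hu⟩ := QuotientAddGroup.mk_surjective (g t)
  -- `e` is a local inverse of the covering map `ℝ → AddCircle q` near `g t`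
  obtain ⟨e, hue, he⟩ := isLocalHomeomorph_coe q u
  set φ : ℝ → AddCircle q := fun s => g s
  have hφ : Continuous φ := hg.comp continuous_quotient_mk'
  have hφo : IsOpenMap φ := hgo.comp QuotientAddGroup.isOpenMap_coe
  have hφt : φ t ∈ e.target := by
    rw [show φ t = e u by rw [← he]; exact hu.symm]
    exact e.map_source hue
  obtain ⟨l, r, htJ, hJ⟩ := mem_nhds_iff_exists_Ioo_subset.1
    ((e.open_target.preimage hφ).mem_nhds hφt)
  have hinj : InjOn (e.symm ∘ φ) (Ioo l r) := by
    refine ContinuousOn.injOn_of_isOpen_image ordConnected_Ioo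
      (e.continuousOn_symm.comp hφ.continuousOn hJ) fun U hUJ hU => ?_
    rw [image_comp]
    exact e.isOpen_image_symm_of_subset_target (hφo U hU) (image_subset_iff.2 (hUJ.trans hJ))
  refine ⟨(↑) '' Ioo l r, (QuotientAddGroup.isOpenMap_coe _ isOpen_Ioo).mem_nhds ⟨t, htJ, rfl⟩, ?_⟩
  rintro - ⟨s₁, hs₁, rfl⟩ - ⟨s₂, hs₂, rfl⟩ hgs
  exact congrArg _ (hinj hs₁ hs₂ (congrArg e.symm hgs))

theorem isTotallyDisconnected_of_interior_eq_empty {p : ℝ} [Fact (0 < p)]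
    {S : Set (AddCircle p)} (hS : interior S = ∅) : IsTotallyDisconnected S := by
  intro t htS ht
  by_contra hnt
  obtain ⟨x, hx, y, hy, hxy⟩ := not_subsingleton_iff.1 hnt
  obtain ⟨w, hwt⟩ : ∃ w, w ∉ t := by
    by_contra! hall
    simp [eq_univ_of_forall fun z => htS (hall z)] at hS
  obtain ⟨a, rfl⟩ := QuotientAddGroup.mk_surjective w
  -- the chart of the circle cut open at `w`
  set e := openPartialHomeomorphCoe p a
  have hte : t ⊆ e.target := fun z hz hza => hwt (hza ▸ hz)
  have ht' : IsPreconnected (e.symm '' t) := ht.image _ (e.continuousOn_symm.mono hte)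
  obtain ⟨u, hu, v, hv, huv⟩ : ∃ u ∈ e.symm '' t, ∃ v ∈ e.symm '' t, u < v := by
    have hne : e.symm x ≠ e.symm y := fun h => hxy (e.symm.injOn (hte hx) (hte hy) h)
    rcases lt_or_gt_of_ne hne with h | h
    · exact ⟨_, mem_image_of_mem _ hx, _, mem_image_of_mem _ hy, h⟩
    · exact ⟨_, mem_image_of_mem _ hy, _, mem_image_of_mem _ hx, h⟩
  have hIoo : Ioo u v ⊆ e.symm '' t := Ioo_subset_Icc_self.trans (ht'.Icc_subset hu hv)
  have hsub : e '' Ioo u v ⊆ S := by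
    rintro - ⟨s, hs, rfl⟩
    obtain ⟨z, hz, rfl⟩ := hIoo hs
    exact htS (by rwa [e.right_inv (hte hz)])
  have hopen : IsOpen (e '' Ioo u v) := e.isOpen_image_of_subset_source isOpen_Ioo
    (hIoo.trans (image_subset_iff.2 fun z hz => e.map_target (hte hz)))
  obtain ⟨_, hs⟩ := (nonempty_Ioo.2 huv).image e
  simpa [hS] using interior_maximal hsub hopen hs

end AddCircle

theorem AccPt.apply_of_injOn {X Y : Type*} [TopologicalSpace X] [TopologicalSpace Y]
    {g : X → Y} {x : X} {A : Set X} {B : Set Y} {V : Set X} (hg : ContinuousAt g x)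
    (hV : V ∈ 𝓝 x) (hinj : InjOn g V) (hAB : MapsTo g A B) (hx : AccPt x (𝓟 A)) :
    AccPt (g x) (𝓟 B) := by
  rw [accPt_iff_nhds] at hx ⊢
  intro U hU
  obtain ⟨y, ⟨⟨hyU, hyV⟩, hyA⟩, hyx⟩ := hx _ (inter_mem (hg.preimage_mem_nhds hU) hV)
  exact ⟨g y, ⟨hyU, hAB hyA⟩, fun h => hyx (hinj hyV (mem_of_mem_nhds hV) h)⟩

theorem Perfect.union {X : Type*} [TopologicalSpace X] {A B : Set X} (hA : Perfect A)
    (hB : Perfect B) : Perfect (A ∪ B) := by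
  refine ⟨hA.closed.union hB.closed, preperfect_iff_subset_derivedSet.2 ?_⟩
  rw [derivedSet_union]
  exact union_subset_union (preperfect_iff_subset_derivedSet.1 hA.acc)
    (preperfect_iff_subset_derivedSet.1 hB.acc)

theorem interior_sdiff_interior_eq_empty {X : Type*} [TopologicalSpace X] (s : Set X) :
    interior (s \ interior s) = ∅ :=
  eq_empty_of_forall_notMem fun _ hx =>
    (interior_subset hx).2 (interior_mono sdiff_subset hx)

section IFS

variable {X : Type*} {n : ℕ} {f : Fin n → X → X}

theorem orbitIFS_subset {S : Set X} (hS : ∀ i, MapsTo (f i) S S) {x : X} (hx : x ∈ S) :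
    orbitIFS f x ⊆ S := by
  rintro - ⟨l, -, rfl⟩
  induction l with
  | nil => exact hx
  | cons i l ih => exact hS i ih

theorem IsMinimalIFS.subset_of_isClosed [TopologicalSpace X] {M S : Set X} (hM : IsMinimalIFS f M)
    (hS : IsClosed S) (hSinv : ∀ i, MapsTo (f i) S S) {x : X} (hxM : x ∈ M) (hxS : x ∈ S) :
    M ⊆ S :=
  hM.2.2.2 x hxM ▸ closure_minimal (orbitIFS_subset hSinv hxS) hS

end IFS

theorem IsMinimalIFS.perfect_of_accPt {p : ℝ} {n : ℕ} {f : Fin n → AddCircle p → AddCircle p}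
    (hcont : ∀ i, Continuous (f i)) (hopen : ∀ i, IsOpenMap (f i)) {M : Set (AddCircle p)}
    (hM : IsMinimalIFS f M) {x : AddCircle p} (hxM : x ∈ M) (hx : AccPt x (𝓟 M)) : Perfect M := by
  have hMinv : ∀ i, MapsTo (f i) M M := fun i => mapsTo_iff_image_subset.2 (hM.2.2.1 i)
  have hderiv_inv : ∀ i, MapsTo (f i) (M ∩ derivedSet M) (M ∩ derivedSet M) := by
    rintro i y ⟨hyM, hy⟩
    obtain ⟨V, hV, hinj⟩ := AddCircle.exists_mem_nhds_injOn_of_isOpenMap (hcont i) (hopen i) y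
    exact ⟨hMinv i hyM, hy.apply_of_injOn (hcont i).continuousAt hV hinj (hMinv i)⟩
  have hsub := hM.subset_of_isClosed (hM.2.1.inter (isClosed_derivedSet M)) hderiv_inv hxM ⟨hxM, hx⟩
  exact ⟨hM.2.1, fun y hy => (hsub hy).2⟩

theorem IsCanonicalDecomp.sdiff_closure_subset {p : ℝ} [Fact (0 < p)] {M I K N : Set (AddCircle p)}
    (hd : IsCanonicalDecomp M I K N) (hK : IsCantorSet K) (hM : Perfect M) :
    M \ closure I ⊆ K := by
  obtain ⟨rfl, -, hKsub, hKmax, -, -⟩ := hd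
  have hpre : Preperfect (M \ closure (interior M)) := by
    rw [sdiff_eq, inter_comm]
    exact hM.acc.open_inter isClosed_closure.isOpen_compl
  set P := closure (M \ closure (interior M))
  have hP : Perfect P := hpre.perfect_closure
  have hPsub : P ⊆ M \ interior M := by
    refine subset_sdiff.2 ⟨closure_minimal sdiff_subset hM.closed, ?_⟩
    exact Disjoint.closure_left (disjoint_sdiff_left.mono_right subset_closure) isOpen_interior
  have hKP : IsCantorSet (K ∪ P) := by
    have hKPperf : Perfect (K ∪ P) := hK.2.2.1.union hP
    refine ⟨hK.1.mono subset_union_left, hKPperf.closed.isCompact, hKPperf,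
      AddCircle.isTotallyDisconnected_of_interior_eq_empty ?_⟩
    exact eq_empty_of_subset_empty
      (interior_sdiff_interior_eq_empty M ▸ interior_mono (union_subset hKsub hPsub))
  rw [← hKmax _ hKP subset_union_left (union_subset hKsub hPsub)]
  exact subset_closure.trans subset_union_right

theorem stmt10 {n : ℕ} (f : Fin n → S1 → S1)
    (hcont : ∀ i, Continuous (f i)) (hopen : ∀ i, IsOpenMap (f i))
    (M I K N : Set S1) (hM : IsMinimalIFS f M) (hd : IsCanonicalDecomp M I K N)
    (hK : K.Nonempty) (hN : N.Nonempty) :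
    (frontier I ∩ N).Nonempty := by
  by_contra hfN
  obtain ⟨rfl, hKC, hKsub, -, rfl, -⟩ := id hd
  have hKC : IsCantorSet K := hKC.resolve_right hK.ne_empty
  have hKM : K ⊆ M := fun y hy => (hKsub hy).1
  obtain ⟨k, hk⟩ := hK
  have hMperf : Perfect M :=
    hM.perfect_of_accPt hcont hopen (hKM hk) ((hKC.2.2.1.acc k hk).mono (principal_mono.2 hKM))
  obtain ⟨z, hzM, hz⟩ := hN
  have hzI : z ∉ closure (interior M) := by
    rw [closure_eq_self_union_frontier]
    rintro (hzI | hzF)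
    · exact hz (Or.inl hzI)
    · exact hfN ⟨z, hzF, hzM, hz⟩
  exact hz (Or.inr (hd.sdiff_closure_subset hKC hMperf ⟨hzM, hzI⟩))
end

section
/- Let f : S¹ → S¹ be a continuous open map and M ⊆ S¹ a closed set with f(M) ⊆ M. Let K = {x ∈ M : every neighborhood of x meets M in an uncountable set} be the set of condensation points of M. Then f(K) ⊆ K. -/
open Set Topology Filter

/-! In charts a continuous open self-map of the circle becomes a continuous real function `g`
that is open on intervals. Such a `g` cannot satisfy `g a = g b` with `a < b`: the extreme
values of `g` on `[a, b]` would then lie outside the open set `g '' (a, b)`, hence equal `g a`,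
making `g '' (a, b)` an open singleton. So `f` is locally injective and its fibres, being
discrete and compact, are finite. If `U ∋ f x` met `M` countably, then, as `f '' M ⊆ M`, the
neighbourhood `f ⁻¹' U` of `x` would meet `M` inside the countable union of the fibres over
`U ∩ M`. -/

lemma ne_of_isOpen_image_Ioo {g : ℝ → ℝ} {a b : ℝ} (hab : a < b)
    (hg : ContinuousOn g (Icc a b)) (hopen : IsOpen (g '' Ioo a b)) : g a ≠ g b := by
  intro hgab
  set K := g '' Icc a b
  have hK : IsCompact K := isCompact_Icc.image_of_continuousOn hg
  have hKne : K.Nonempty := (nonempty_Icc.2 hab.le).image g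
  have hOK : g '' Ioo a b ⊆ K := image_mono Ioo_subset_Icc_self
  have hKO : K ⊆ insert (g a) (g '' Ioo a b) := by
    rintro _ ⟨x, hx, rfl⟩
    rcases eq_endpoints_or_mem_Ioo_of_mem_Icc hx with rfl | rfl | hx
    · exact mem_insert _ _
    · exact hgab ▸ mem_insert _ _
    · exact mem_insert_of_mem _ (mem_image_of_mem g hx)
  have hsup : sSup K = g a := by
    refine (hKO (hK.sSup_mem hKne)).resolve_right fun h => ?_
    obtain ⟨y, hy, hyO⟩ := Eventually.exists_gt (hopen.mem_nhds h)
    exact hy.not_ge (le_csSup hK.bddAbove (hOK hyO))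
  have hinf : sInf K = g a := by
    refine (hKO (hK.sInf_mem hKne)).resolve_right fun h => ?_
    obtain ⟨y, hy, hyO⟩ := Eventually.exists_lt (hopen.mem_nhds h)
    exact hy.not_ge (csInf_le hK.bddBelow (hOK hyO))
  have hsingleton : g '' Ioo a b = {g a} := by
    refine ((nonempty_Ioo.2 hab).image g).subset_singleton_iff.1 fun y hy => le_antisymm ?_ ?_
    · exact hsup ▸ le_csSup hK.bddAbove (hOK hy)
    · exact hinf ▸ csInf_le hK.bddBelow (hOK hy)
  exact not_isOpen_singleton (g a) (hsingleton ▸ hopen)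

lemma injOn_of_isOpen_image {g : ℝ → ℝ} {s : Set ℝ} (hs : s.OrdConnected)
    (hg : ContinuousOn g s) (hopen : ∀ t ⊆ s, IsOpen t → IsOpen (g '' t)) : InjOn g s := by
  have key : ∀ a ∈ s, ∀ b ∈ s, a < b → g a ≠ g b := fun a ha b hb hab =>
    ne_of_isOpen_image_Ioo hab (hg.mono (hs.out ha hb))
      (hopen _ (Ioo_subset_Icc_self.trans (hs.out ha hb)) isOpen_Ioo)
  intro a ha b hb hgab
  by_contra hne
  rcases lt_or_gt_of_ne hne with h | h
  · exact key a ha b hb h hgab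
  · exact key b hb a ha h hgab.symm

lemma IsOpenMap.exists_mem_nhds_injOn_of_charts {X Y : Type*} [TopologicalSpace X]
    [TopologicalSpace Y] {f : X → Y} (hf : Continuous f) (hopen : IsOpenMap f)
    (e : OpenPartialHomeomorph X ℝ) (e' : OpenPartialHomeomorph Y ℝ) {x : X}
    (hx : x ∈ e.source) (hfx : f x ∈ e'.source) : ∃ U ∈ 𝓝 x, InjOn f U := by
  set g : ℝ → ℝ := e' ∘ f ∘ e.symm
  set s : Set ℝ := e.target ∩ e.symm ⁻¹' (f ⁻¹' e'.source)
  have hs : IsOpen s := e.isOpen_inter_preimage_symm (e'.open_source.preimage hf)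
  have hxs : e x ∈ s := ⟨e.map_source hx, by simpa [s, e.left_inv hx] using hfx⟩
  have hg : ContinuousOn g s :=
    e'.continuousOn.comp (hf.comp_continuousOn (e.continuousOn_symm.mono inter_subset_left))
      fun _ hy => hy.2
  have hgopen : ∀ t ⊆ s, IsOpen t → IsOpen (g '' t) := by
    intro t hts ht
    have h₁ : IsOpen (e.symm '' t) :=
      e.symm.isOpen_image_of_subset_source ht (hts.trans inter_subset_left)
    have h₂ : f '' (e.symm '' t) ⊆ e'.source := by
      rintro _ ⟨_, ⟨y, hy, rfl⟩, rfl⟩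
      exact (hts hy).2
    simpa only [g, image_comp] using e'.isOpen_image_of_subset_source (hopen _ h₁) h₂
  obtain ⟨l, r, hlr, hlrs⟩ := mem_nhds_iff_exists_Ioo_subset.1 (hs.mem_nhds hxs)
  have hinj : InjOn g (Ioo l r) :=
    injOn_of_isOpen_image ordConnected_Ioo (hg.mono hlrs) fun t ht => hgopen t (ht.trans hlrs)
  refine ⟨e.source ∩ e ⁻¹' Ioo l r,
    inter_mem (e.open_source.mem_nhds hx) (e.continuousAt hx (isOpen_Ioo.mem_nhds hlr)), ?_⟩
  rintro y ⟨hy, hyI⟩ z ⟨hz, hzI⟩ hfyz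
  refine e.injOn hy hz (hinj hyI hzI ?_)
  simp [g, e.left_inv hy, e.left_inv hz, hfyz]

lemma AddCircle.exists_mem_chart_source {p : ℝ} [Fact (0 < p)] (x : AddCircle p) :
    ∃ e : OpenPartialHomeomorph (AddCircle p) ℝ, x ∈ e.source := by
  obtain ⟨t, rfl⟩ := QuotientAddGroup.mk_surjective x
  have hp : 0 < p := Fact.out
  let e := AddCircle.openPartialHomeomorphCoe p (t - p / 2)
  exact ⟨e.symm, e.map_source (x := t) ⟨by linarith, by linarith⟩⟩

lemma AddCircle.isLocallyInjective_of_isOpenMap {p q : ℝ} [Fact (0 < p)] [Fact (0 < q)]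
    {f : AddCircle p → AddCircle q} (hf : Continuous f) (hopen : IsOpenMap f) :
    IsLocallyInjective f := by
  rw [isLocallyInjective_iff_nhds]
  intro x
  obtain ⟨e, hx⟩ := AddCircle.exists_mem_chart_source x
  obtain ⟨e', hfx⟩ := AddCircle.exists_mem_chart_source (f x)
  exact hopen.exists_mem_nhds_injOn_of_charts hf e e' hx hfx

lemma IsLocallyInjective.finite_preimage_singleton {X Y : Type*} [TopologicalSpace X]
    [TopologicalSpace Y] [CompactSpace X] [T1Space Y] {f : X → Y} (hf : IsLocallyInjective f)
    (hcont : Continuous f) (y : Y) : (f ⁻¹' {y}).Finite := by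
  refine (isClosed_singleton.preimage hcont).isCompact.finite
    (isDiscrete_iff_discreteTopology.2 ((discreteTopology_iff_locallyInjective y).2 ?_))
  convert hf.comp_right (continuous_subtype_val (p := (· ∈ f ⁻¹' {y}))) Subtype.val_injective
    using 1
  funext z
  exact z.2.symm

theorem stmt12_general (f : S1 → S1) (hcont : Continuous f) (hopen : IsOpenMap f)
    (M : Set S1) (hinv : f '' M ⊆ M) :
    f '' {x : S1 | x ∈ M ∧ ∀ U ∈ 𝓝 x, ¬ (U ∩ M).Countable}
      ⊆ {x : S1 | x ∈ M ∧ ∀ U ∈ 𝓝 x, ¬ (U ∩ M).Countable} := by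
  have hfib : ∀ y, (f ⁻¹' {y}).Countable := fun y =>
    ((AddCircle.isLocallyInjective_of_isOpenMap hcont hopen).finite_preimage_singleton
      hcont y).countable
  rintro _ ⟨x, ⟨hxM, hx⟩, rfl⟩
  refine ⟨hinv (mem_image_of_mem f hxM), fun U hU hUM => ?_⟩
  have hpre : (f ⁻¹' (U ∩ M)).Countable :=
    biUnion_preimage_singleton f (U ∩ M) ▸ hUM.biUnion fun y _ => hfib y
  exact hx (f ⁻¹' U) (hcont.continuousAt.preimage_mem_nhds hU)
    (hpre.mono fun y hy => show f y ∈ U ∩ M from ⟨hy.1, hinv (mem_image_of_mem f hy.2)⟩)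

theorem stmt12 (f : S1 → S1) (hcont : Continuous f) (hopen : IsOpenMap f)
    (M : Set S1) (hM : IsClosed M) (hinv : f '' M ⊆ M) :
    f '' {x : S1 | x ∈ M ∧ ∀ U ∈ 𝓝 x, ¬ (U ∩ M).Countable}
      ⊆ {x : S1 | x ∈ M ∧ ∀ U ∈ 𝓝 x, ¬ (U ∩ M).Countable} :=
  stmt12_general f hcont hopen M hinv
end
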